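/- Let K be a real 3×3 matrix with singular value decomposition K = UΣVᵀ where Σ = diag(σ₁,σ₂,σ₃) and σ₁ ≥ σ₂ ≥ σ₃ ≥ 0. Then max over S ∈ SO(3) of tr(K·S) equals σ₁ + σ₂ + sign(det(V·Uᵀ))·σ₃, and this maximum is attained at S⋆ = V·Λ·Uᵀ with Λ = diag(1,1,det(V·Uᵀ)). -/

import Mathlib

/-!
Write `M = Vᵀ S U`; it is orthogonal with `det M = det (V Uᵀ) = ±1`, and
`tr (K S) = tr (Σ M) = (σ₀ - σ₁) M₀₀ + (σ₁ - σ₂) (M₀₀ + M₁₁) + σ₂ tr M`. Diagonal entries of an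
orthogonal matrix are at most `1`, and `tr M ≤ 2 + det M`: for any `3 × 3` matrix,
`tr (Mᵀ M) + 2 tr (adj M) - (tr M)²` is the sum of the squares of `M i j - M j i`, while for
orthogonal `M` we have `tr (Mᵀ M) = 3` and `adj M = det M • Mᵀ`, whence `(tr M - det M)² ≤ 4`.
All three bounds are attained by `M = diag (1, 1, det (V Uᵀ))`.
-/

open Matrix

def SO3 (S : Matrix (Fin 3) (Fin 3) ℝ) : Prop :=
  S ∈ Matrix.orthogonalGroup (Fin 3) ℝ ∧ S.det = 1

namespace Matrix

variable {R : Type*} [CommRing R]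

theorem adjugate_eq_det_smul_transpose {n : Type*} [Fintype n] [DecidableEq n]
    {A : Matrix n n R} (hA : A * Aᵀ = 1) : A.adjugate = A.det • Aᵀ := by
  calc A.adjugate = A.adjugate * (A * Aᵀ) := by rw [hA, Matrix.mul_one]
    _ = A.det • Aᵀ := by rw [← Matrix.mul_assoc, adjugate_mul, smul_mul, Matrix.one_mul]

variable [LinearOrder R] [IsStrictOrderedRing R]

theorem trace_sq_le_fin_three (M : Matrix (Fin 3) (Fin 3) R) :
    M.trace ^ 2 ≤ (Mᵀ * M).trace + 2 * M.adjugate.trace := by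
  have hgap : (Mᵀ * M).trace + 2 * M.adjugate.trace - M.trace ^ 2 =
      (M 0 1 - M 1 0) ^ 2 + (M 0 2 - M 2 0) ^ 2 + (M 1 2 - M 2 1) ^ 2 := by
    simp [trace_fin_three, mul_apply, Fin.sum_univ_three, adjugate_fin_three]
    ring
  rw [← sub_nonneg, hgap]
  positivity

theorem trace_le_two_add_det_of_mul_transpose_eq_one {M : Matrix (Fin 3) (Fin 3) R}
    (hM : M * Mᵀ = 1) : M.trace ≤ 2 + M.det := by
  have hdet : M.det ^ 2 = 1 := by
    simpa [sq, det_transpose] using congrArg det hM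
  have hsq := M.trace_sq_le_fin_three
  rw [mul_eq_one_comm.mp hM, adjugate_eq_det_smul_transpose hM, trace_smul, trace_transpose,
    trace_one, Fintype.card_fin, smul_eq_mul] at hsq
  have : (M.trace - M.det) ^ 2 ≤ 2 ^ 2 := by push_cast at hsq; nlinarith
  linarith [le_of_sq_le_sq this zero_le_two]

theorem sign_det_of_mem_orthogonalGroup {n : Type*} [Fintype n] [DecidableEq n]
    {A : Matrix n n ℝ} (hA : A ∈ orthogonalGroup n ℝ) : Real.sign A.det = A.det := by
  have hdet : A.det * A.det = 1 := (det_of_mem_unitary hA).2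
  rcases mul_self_eq_one_iff.mp hdet with h | h <;> rw [h]
  · exact Real.sign_one
  · exact Real.sign_of_neg neg_one_lt_zero

theorem trace_diagonal_mul_le_of_mem_orthogonalGroup {σ : Fin 3 → ℝ}
    (hσ : σ 0 ≥ σ 1 ∧ σ 1 ≥ σ 2 ∧ σ 2 ≥ 0) {M : Matrix (Fin 3) (Fin 3) ℝ}
    (hM : M ∈ orthogonalGroup (Fin 3) ℝ) :
    (diagonal σ * M).trace ≤ σ 0 + σ 1 + M.det * σ 2 := by
  obtain ⟨h01, h12, h2⟩ := hσ
  have hdiag (i : Fin 3) : M i i ≤ 1 :=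
    (le_abs_self _).trans (by simpa using entry_norm_bound_of_unitary hM i i)
  have h00 := hdiag 0
  have h11 := hdiag 1
  have htr :=
    trace_le_two_add_det_of_mul_transpose_eq_one ((mem_orthogonalGroup_iff (Fin 3) ℝ).mp hM)
  rw [trace_fin_three] at htr
  simp only [trace_fin_three, diagonal_mul]
  calc σ 0 * M 0 0 + σ 1 * M 1 1 + σ 2 * M 2 2
      = (σ 0 - σ 1) * M 0 0 + (σ 1 - σ 2) * (M 0 0 + M 1 1)
          + σ 2 * (M 0 0 + M 1 1 + M 2 2) := by ring
    _ ≤ (σ 0 - σ 1) * 1 + (σ 1 - σ 2) * (1 + 1) + σ 2 * (2 + M.det) := by gcongr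
    _ = σ 0 + σ 1 + M.det * σ 2 := by ring

theorem transpose_mem_orthogonalGroup {n : Type*} [Fintype n] [DecidableEq n]
    {A : Matrix n n ℝ} (hA : A ∈ orthogonalGroup n ℝ) : Aᵀ ∈ orthogonalGroup n ℝ := by
  have h := Unitary.star_mem hA
  rwa [star_eq_conjTranspose, conjTranspose_eq_transpose_of_trivial] at h

theorem diagonal_mem_orthogonalGroup {n : Type*} [Fintype n] [DecidableEq n] {d : n → ℝ}
    (hd : ∀ i, d i * d i = 1) : diagonal d ∈ orthogonalGroup n ℝ := by
  rw [mem_orthogonalGroup_iff, diagonal_transpose, diagonal_mul_diagonal, ← diagonal_one]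
  exact congrArg diagonal (funext hd)

end Matrix

theorem trace_mul_mul_transpose_mul (U V S : Matrix (Fin 3) (Fin 3) ℝ) (σ : Fin 3 → ℝ) :
    (U * diagonal σ * Vᵀ * S).trace = (diagonal σ * (Vᵀ * S * U)).trace := by
  rw [Matrix.mul_assoc U, Matrix.mul_assoc U, trace_mul_comm U]
  simp only [Matrix.mul_assoc]

section Procrustes

variable {U V : Matrix (Fin 3) (Fin 3) ℝ}

theorem trace_mul_le_of_SO3 (hU : U ∈ orthogonalGroup (Fin 3) ℝ)
    (hV : V ∈ orthogonalGroup (Fin 3) ℝ) {σ : Fin 3 → ℝ}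
    (hσ : σ 0 ≥ σ 1 ∧ σ 1 ≥ σ 2 ∧ σ 2 ≥ 0) {S : Matrix (Fin 3) (Fin 3) ℝ}
    (hS : SO3 S) :
    (U * diagonal σ * Vᵀ * S).trace ≤ σ 0 + σ 1 + (V * Uᵀ).det * σ 2 := by
  have hM_det : (Vᵀ * S * U).det = (V * Uᵀ).det := by
    simp only [det_mul, det_transpose, hS.2]
    ring
  rw [trace_mul_mul_transpose_mul, ← hM_det]
  exact trace_diagonal_mul_le_of_mem_orthogonalGroup hσ
    (mul_mem (mul_mem (transpose_mem_orthogonalGroup hV) hS.1) hU)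

noncomputable def optimalRotation (U V : Matrix (Fin 3) (Fin 3) ℝ) : Matrix (Fin 3) (Fin 3) ℝ :=
  V * diagonal ![1, 1, (V * Uᵀ).det] * Uᵀ

theorem SO3_optimalRotation (hU : U ∈ orthogonalGroup (Fin 3) ℝ)
    (hV : V ∈ orthogonalGroup (Fin 3) ℝ) : SO3 (optimalRotation U V) := by
  have hεε : (V * Uᵀ).det * (V * Uᵀ).det = 1 :=
    (det_of_mem_unitary (mul_mem hV (transpose_mem_orthogonalGroup hU))).2
  have hΛ : diagonal ![1, 1, (V * Uᵀ).det] ∈ orthogonalGroup (Fin 3) ℝ :=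
    diagonal_mem_orthogonalGroup fun i => by fin_cases i <;> simp [-det_mul, hεε]
  refine ⟨mul_mem (mul_mem hV hΛ) (transpose_mem_orthogonalGroup hU), ?_⟩
  simpa [optimalRotation, det_mul, Fin.prod_univ_three, mul_comm, mul_left_comm] using hεε

theorem trace_mul_optimalRotation (hU : U ∈ orthogonalGroup (Fin 3) ℝ)
    (hV : V ∈ orthogonalGroup (Fin 3) ℝ) (σ : Fin 3 → ℝ) :
    (U * diagonal σ * Vᵀ * optimalRotation U V).trace = σ 0 + σ 1 + (V * Uᵀ).det * σ 2 := by
  have hUU : Uᵀ * U = 1 := (mem_orthogonalGroup_iff' (Fin 3) ℝ).mp hU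
  have hVV : Vᵀ * V = 1 := (mem_orthogonalGroup_iff' (Fin 3) ℝ).mp hV
  have hΛ : Vᵀ * optimalRotation U V * U = diagonal ![1, 1, (V * Uᵀ).det] := by
    simp only [optimalRotation, ← Matrix.mul_assoc, hVV, Matrix.one_mul]
    rw [Matrix.mul_assoc, hUU, Matrix.mul_one]
  rw [trace_mul_mul_transpose_mul, hΛ]
  simp [Fin.sum_univ_three, mul_comm]

end Procrustes

theorem procrustes_max
    (K U V : Matrix (Fin 3) (Fin 3) ℝ) (σ : Fin 3 → ℝ)
    (hU : U ∈ Matrix.orthogonalGroup (Fin 3) ℝ)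
    (hV : V ∈ Matrix.orthogonalGroup (Fin 3) ℝ)
    (hσ : σ 0 ≥ σ 1 ∧ σ 1 ≥ σ 2 ∧ σ 2 ≥ 0)
    (hK : K = U * Matrix.diagonal σ * Vᵀ) :
    IsGreatest {t : ℝ | ∃ S, SO3 S ∧ t = Matrix.trace (K * S)}
      (σ 0 + σ 1 + Real.sign ((V * Uᵀ).det) * σ 2) ∧
    SO3 (V * Matrix.diagonal ![1, 1, (V * Uᵀ).det] * Uᵀ) ∧
    Matrix.trace (K * (V * Matrix.diagonal ![1, 1, (V * Uᵀ).det] * Uᵀ)) =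
      σ 0 + σ 1 + Real.sign ((V * Uᵀ).det) * σ 2 := by
  subst hK
  rw [sign_det_of_mem_orthogonalGroup (mul_mem hV (transpose_mem_orthogonalGroup hU))]
  have hSO3 := SO3_optimalRotation hU hV
  have hmax := trace_mul_optimalRotation hU hV σ
  refine ⟨⟨⟨_, hSO3, hmax.symm⟩, ?_⟩, hSO3, hmax⟩
  rintro _ ⟨S, hS, rfl⟩
  exact trace_mul_le_of_SO3 hU hV hσ hS
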